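/- arXiv:2511.16479 — 4 statements merged into one kernel-verified Lean document; each statement's English description precedes it below -/
import Mathlib

section
/- Let $f : \mathbb{N} \to \mathbb{N}$ and let $\ell \ge 1$. There exists a constant $B = B(\ell, f)$ such that every finite solvable group $G$ of derived length at most $\ell$ satisfying $ab_k(G) \le f(k)$ for all $k \ge 1$ has order $|G| \le B$. -/
/-!
A group of derived length at most `ℓ + 1` is an extension of the abelian group
`N = G^(ℓ)` by `G/N`, which has derived length at most `ℓ`. Since `ab_k` can only drop on
passing to quotients, induction bounds `|G : N| = |G/N|` by some `b`; as `N` is abelian,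
`|N| = |N : N'| ≤ ab_b(G) ≤ f(b)`, so `|G| ≤ b · f(b)`.
-/

/-- The abelianization growth function: `ab_k(G)` is the largest index `|H : H'|`
over subgroups `H ≤ G` of index at most `k`. -/
noncomputable def abGrowth (G : Type*) [Group G] (k : ℕ) : ℕ :=
  sSup {n | ∃ H : Subgroup G, H.index ≤ k ∧ n = Nat.card (Abelianization H)}

section AbGrowth

variable {G : Type*} [Group G] [Finite G]

lemma abGrowth_bddAbove (k : ℕ) :
    BddAbove {n | ∃ H : Subgroup G, H.index ≤ k ∧ n = Nat.card (Abelianization H)} := by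
  refine ⟨Nat.card G, ?_⟩
  rintro n ⟨H, -, rfl⟩
  calc Nat.card (Abelianization H) ≤ Nat.card H :=
        Nat.le_of_dvd Nat.card_pos (Subgroup.index_dvd_card _)
    _ ≤ Nat.card G := Nat.card_le_card_of_injective _ H.subtype_injective

lemma card_abelianization_le_abGrowth {k : ℕ} {H : Subgroup G} (hH : H.index ≤ k) :
    Nat.card (Abelianization H) ≤ abGrowth G k :=
  le_csSup (abGrowth_bddAbove k) ⟨H, hH, rfl⟩

lemma card_le_abGrowth_of_isMulCommutative {k : ℕ} (H : Subgroup G) [IsMulCommutative H]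
    (hH : H.index ≤ k) : Nat.card H ≤ abGrowth G k := by
  have hcard : Nat.card (Abelianization H) = Nat.card H := by
    rw [Abelianization, ← Subgroup.index, commutator_eq_bot, Subgroup.index_bot]
  exact hcard ▸ card_abelianization_le_abGrowth hH

lemma card_abelianization_le_of_surjective {Q : Type*} [Group Q] {φ : G →* Q}
    (hφ : Function.Surjective φ) : Nat.card (Abelianization Q) ≤ Nat.card (Abelianization G) := by
  have hmap : (commutator G).map φ = commutator Q := by
    simpa only [derivedSeries_one] using map_derivedSeries_eq hφ 1
  calc Nat.card (Abelianization Q) = ((commutator G).map φ).index := by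
        rw [hmap, Subgroup.index]; rfl
    _ ≤ Nat.card (Abelianization G) :=
        Nat.le_of_dvd (Nat.pos_of_ne_zero Subgroup.index_ne_zero_of_finite)
          ((commutator G).index_map_dvd hφ)

lemma abGrowth_le_of_surjective {Q : Type*} [Group Q] {φ : G →* Q}
    (hφ : Function.Surjective φ) (k : ℕ) : abGrowth Q k ≤ abGrowth G k := by
  refine csSup_le' ?_
  rintro n ⟨K, hK, rfl⟩
  calc Nat.card (Abelianization K) ≤ Nat.card (Abelianization (K.comap φ)) :=
        card_abelianization_le_of_surjective (φ.subgroupComap_surjective_of_surjective K hφ)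
    _ ≤ abGrowth G k :=
        card_abelianization_le_abGrowth ((K.index_comap_of_surjective hφ).trans_le hK)

end AbGrowth

lemma derivedSeries_quotient_derivedSeries (G : Type*) [Group G] (n : ℕ) :
    derivedSeries (G ⧸ derivedSeries G n) n = ⊥ := by
  rw [← map_derivedSeries_eq (QuotientGroup.mk'_surjective _) n, Subgroup.map_eq_bot_iff,
    QuotientGroup.ker_mk']

def abGrowthCardBound (f : ℕ → ℕ) : ℕ → ℕ
  | 0 => 1
  | ℓ + 1 => abGrowthCardBound f ℓ * f (abGrowthCardBound f ℓ)

theorem card_le_abGrowthCardBound (f : ℕ → ℕ) (ℓ : ℕ) (G : Type*) [Group G] [Finite G]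
    (hG : derivedSeries G ℓ = ⊥) (hf : ∀ k, 1 ≤ k → abGrowth G k ≤ f k) :
    Nat.card G ≤ abGrowthCardBound f ℓ := by
  induction ℓ generalizing G with
  | zero =>
    rw [← Subgroup.card_top, ← derivedSeries_zero, hG, Subgroup.card_bot]
    rfl
  | succ ℓ ih =>
    set b := abGrowthCardBound f ℓ
    set N := derivedSeries G ℓ
    have hidx : N.index ≤ b := by
      rw [Subgroup.index_eq_card]
      exact ih (G ⧸ N) (derivedSeries_quotient_derivedSeries G ℓ) fun k hk =>
        (abGrowth_le_of_surjective (QuotientGroup.mk'_surjective N) k).trans (hf k hk)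
    have : IsMulCommutative N := by
      rwa [← Subgroup.commutator_self_eq_bot_iff, ← derivedSeries_succ]
    calc Nat.card G = N.index * Nat.card N := N.index_mul_card.symm
      _ ≤ b * f b := Nat.mul_le_mul hidx <|
          (card_le_abGrowth_of_isMulCommutative N hidx).trans
            (hf b ((Nat.pos_of_ne_zero Subgroup.index_ne_zero_of_finite).trans_le hidx))

theorem card_bounded_of_abGrowth_bounded_general (f : ℕ → ℕ) (ℓ : ℕ) :
    ∃ B : ℕ, ∀ (G : Type) [Group G] [Finite G],
      derivedSeries G ℓ = ⊥ →
      (∀ k, 1 ≤ k → abGrowth G k ≤ f k) →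
      Nat.card G ≤ B :=
  ⟨abGrowthCardBound f ℓ, fun G _ _ => card_le_abGrowthCardBound f ℓ G⟩

/-- Finite solvable groups of bounded derived length with abelianization growth bounded
by a fixed function `f` have bounded order. -/
theorem card_bounded_of_abGrowth_bounded (f : ℕ → ℕ) (ℓ : ℕ) (hℓ : 1 ≤ ℓ) :
    ∃ B : ℕ, ∀ (G : Type) [Group G] [Finite G],
      derivedSeries G ℓ = ⊥ →
      (∀ k, 1 ≤ k → abGrowth G k ≤ f k) →
      Nat.card G ≤ B :=
  card_bounded_of_abGrowth_bounded_general f ℓ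
end

section
/- Let $(G_n)_{n\ge 1}$ be a sequence of finite solvable groups of derived length at most $\ell$ with $|G_n| \to \infty$. Then for every function $f : \mathbb{N} \to \mathbb{N}$ there exist $n$ and $k$ such that $ab_k(G_n) > f(k)$. -/
/-!
If `ab_k(G) ≤ f k` for all `k`, the terms `G⁽ⁱ⁾` of the derived series have index bounded in
terms of `f` and `i` alone: `|G⁽ⁱ⁾ : G⁽ⁱ⁺¹⁾|` is the order of the abelianization of `G⁽ⁱ⁾`, a
subgroup of index `|G : G⁽ⁱ⁾|`, hence at most `ab_k(G)` for `k = |G : G⁽ⁱ⁾|`. When `G⁽ℓ⁾ = 1` this bounds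
`|G| = |G : G⁽ℓ⁾|` by a constant depending only on `f` and `ℓ`, contradicting `|G_n| → ∞`.
-/

open Filter

section abGrowth

variable {G : Type*} [Group G]

lemma le_abGrowth [Finite G] {k : ℕ} (H : Subgroup G) (h : H.index ≤ k) :
    Nat.card (Abelianization H) ≤ abGrowth G k := by
  refine le_csSup ⟨Nat.card G, ?_⟩ ⟨H, h, rfl⟩
  rintro n ⟨K, -, rfl⟩
  exact Nat.le_of_dvd Nat.card_pos
    (((commutator K).index_dvd_card).trans K.card_subgroup_dvd_card)

lemma abGrowth_le {k M : ℕ}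
    (h : ∀ H : Subgroup G, H.index ≤ k → Nat.card (Abelianization H) ≤ M) :
    abGrowth G k ≤ M :=
  csSup_le' fun _ ⟨H, hH, hn⟩ => hn ▸ h H hH

lemma abGrowth_mono [Finite G] : Monotone (abGrowth G) :=
  fun _ _ hk => abGrowth_le fun H hH => le_abGrowth H (hH.trans hk)

lemma relIndex_commutator_eq_card_abelianization (H : Subgroup G) :
    ⁅H, H⁆.relIndex H = Nat.card (Abelianization H) := by
  rw [Subgroup.relIndex, ← H.map_subtype_commutator, Subgroup.subgroupOf,
    Subgroup.comap_map_eq_self_of_injective H.subtype_injective]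
  rfl

lemma index_commutator_le_mul_abGrowth [Finite G] (H : Subgroup G) :
    ⁅H, H⁆.index ≤ H.index * abGrowth G H.index := by
  rw [← Subgroup.relIndex_mul_index H.commutator_le_self, mul_comm,
    relIndex_commutator_eq_card_abelianization]
  exact Nat.mul_le_mul_left _ (le_abGrowth H le_rfl)

end abGrowth

def derivedIndexBound (f : ℕ → ℕ) : ℕ → ℕ
  | 0 => 1
  | i + 1 => derivedIndexBound f i * f (derivedIndexBound f i)

section derivedSeries

variable {G : Type*} [Group G] [Finite G] {f : ℕ → ℕ}

lemma index_derivedSeries_le (hf : ∀ k, abGrowth G k ≤ f k) (i : ℕ) :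
    (derivedSeries G i).index ≤ derivedIndexBound f i := by
  induction i with
  | zero => simp [derivedIndexBound]
  | succ i ih =>
    calc (derivedSeries G (i + 1)).index
        ≤ (derivedSeries G i).index * abGrowth G (derivedSeries G i).index :=
          index_commutator_le_mul_abGrowth _
      _ ≤ derivedIndexBound f i * f (derivedIndexBound f i) :=
          Nat.mul_le_mul ih ((abGrowth_mono ih).trans (hf _))

lemma card_le_derivedIndexBound {ℓ : ℕ} (hG : derivedSeries G ℓ = ⊥)
    (hf : ∀ k, abGrowth G k ≤ f k) : Nat.card G ≤ derivedIndexBound f ℓ := by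
  simpa [hG] using index_derivedSeries_le hf ℓ

end derivedSeries

/-- A sequence of finite solvable groups of bounded derived length and unbounded order
fails the property BAb: no function `f` bounds `ab_k(G_n)` uniformly in `n`. -/
theorem solvable_bounded_derived_length_not_BAb
    (ℓ : ℕ) (G : ℕ → Type) [∀ n, Group (G n)] [∀ n, Finite (G n)]
    (hsolv : ∀ n, derivedSeries (G n) ℓ = ⊥)
    (hcard : Tendsto (fun n => Nat.card (G n)) atTop atTop)
    (f : ℕ → ℕ) :
    ∃ n k, f k < abGrowth (G n) k := by
  by_contra! h
  obtain ⟨n, hn⟩ := (hcard.eventually_gt_atTop (derivedIndexBound f ℓ)).exists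
  exact (card_le_derivedIndexBound (hsolv n) (h n)).not_gt hn
end

section
/- Let $G$ be a group acting on a set $\Omega$, and suppose there exists a $G$-invariant finitely additive probability measure on all subsets of $\Omega$. Then for every finite subset $S \subseteq G$ and every $\varepsilon > 0$ there exists a nonempty finite subset $X \subseteq \Omega$ with $|XS \setminus X| < \varepsilon |X|$, provided $\Omega$ is infinite or, more generally, assuming the Følner characterization of amenable actions. -/
open Pointwise

/-- A `G`-invariant mean on `Ω`: a finitely additive probability measure on all subsets
of `Ω` which is invariant under the `G`-action. -/
def IsInvariantMean (G Ω : Type*) [Group G] [MulAction G Ω] (m : Set Ω → ℝ) : Prop :=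
  m Set.univ = 1 ∧ (∀ A : Set Ω, 0 ≤ m A) ∧
    (∀ A B : Set Ω, Disjoint A B → m (A ∪ B) = m A + m B) ∧
    (∀ (g : G) (A : Set Ω), m (g • A) = m A)

/-! If no finite set is almost invariant under `S`, then every finite set grows by the factor
`1 + ε` under `T = S ∪ {1}`, so some power `Tⁿ` at least doubles every finite set. Hall's marriage
theorem then turns this into an injection of two copies of `Ω` into `Ω` moving each point by an
element of the finite set `Tⁿ`. Sorting the points by the element that moves them cuts each copy
into finitely many pieces whose translates are disjoint, so an invariant mean would give `Ω`
mean `2`. -/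

open Finset Function

namespace IsInvariantMean

variable {G Ω : Type*} [Group G] [MulAction G Ω] {m : Set Ω → ℝ}

lemma measure_empty (hm : IsInvariantMean G Ω m) : m ∅ = 0 := by
  have h := hm.2.2.1 ∅ ∅ (Set.disjoint_empty _)
  rw [Set.union_empty] at h
  linarith

lemma measure_le_one (hm : IsInvariantMean G Ω m) (A : Set Ω) : m A ≤ 1 := by
  have h := hm.2.2.1 A Aᶜ disjoint_compl_right
  rw [Set.union_compl_self, hm.1] at h
  linarith [hm.2.1 Aᶜ]

lemma measure_biUnion_finset (hm : IsInvariantMean G Ω m) {α : Type*} (s : Finset α)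
    (A : α → Set Ω) (hA : (s : Set α).PairwiseDisjoint A) :
    m (⋃ i ∈ s, A i) = ∑ i ∈ s, m (A i) := by
  classical
  induction s using Finset.induction_on with
  | empty => simpa using hm.measure_empty
  | insert a s ha ih =>
    rw [coe_insert, Set.pairwiseDisjoint_insert] at hA
    have hdisj : Disjoint (A a) (⋃ i ∈ s, A i) :=
      Set.disjoint_iUnion₂_right.2 fun i hi => hA.2 i hi (ne_of_mem_of_not_mem hi ha).symm
    rw [set_biUnion_insert, hm.2.2.1 _ _ hdisj, sum_insert ha, ih hA.1]

lemma sum_measure_fiber_eq_one (hm : IsInvariantMean G Ω m) {β : Type*} (T : Finset β)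
    (f : Ω → β) (hf : ∀ x, f x ∈ T) : ∑ t ∈ T, m {x | f x = t} = 1 := by
  rw [← hm.measure_biUnion_finset T _ fun t _ t' _ h =>
    Set.disjoint_left.2 fun x hx hx' => h (hx.symm.trans hx')]
  convert hm.1
  exact Set.eq_univ_of_forall fun x => Set.mem_biUnion (hf x) rfl

theorem card_le_one_of_injective_smul (hm : IsInvariantMean G Ω m) {ι : Type*} [Fintype ι]
    (T : Finset G) (g : Ω × ι → G) (hgT : ∀ p, g p ∈ T)
    (hinj : Injective fun p : Ω × ι => g p • p.1) : Fintype.card ι ≤ 1 := by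
  classical
  -- `A (t, i)` is the part of the `i`-th copy of `Ω` moved by `t`.
  set A : G × ι → Set Ω := fun q => {x | g (x, q.2) = q.1}
  have hdisj :
      ((T ×ˢ univ : Finset (G × ι)) : Set (G × ι)).PairwiseDisjoint fun q => q.1 • A q := by
    rintro ⟨t, i⟩ - ⟨t', i'⟩ - hne
    refine Set.disjoint_left.2 ?_
    rintro - ⟨x, hx, rfl⟩ ⟨x', hx', hxx'⟩
    change g (x, i) = t at hx
    change g (x', i') = t' at hx'
    obtain ⟨rfl, rfl⟩ := Prod.mk.inj (hinj (show g (x', i') • x' = g (x, i) • x by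
      rw [hx, hx']; exact hxx'))
    exact hne (by rw [← hx, ← hx'])
  have hsum : ∑ q ∈ T ×ˢ univ, m (q.1 • A q) = Fintype.card ι := by
    simp only [hm.2.2.2, sum_product_right, A,
      hm.sum_measure_fiber_eq_one T _ fun x => hgT (x, _), sum_const, card_univ, nsmul_one]
  have := hm.measure_le_one (⋃ q ∈ T ×ˢ univ, q.1 • A q)
  rw [hm.measure_biUnion_finset _ _ hdisj, hsum] at this
  exact_mod_cast this

end IsInvariantMean

section Growth

variable {G Ω : Type*} [DecidableEq Ω]

lemma card_smul_sdiff_add_card_le [Monoid G] [MulAction G Ω] [DecidableEq G] (T : Finset G)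
    (X : Finset Ω) : #(T • X \ X) + #X ≤ #(insert 1 T • X) := by
  rw [card_sdiff_add_card]
  refine card_le_card (union_subset (smul_subset_smul_right (subset_insert 1 T)) ?_)
  exact fun x hx => mem_smul.2 ⟨1, mem_insert_self 1 T, x, hx, one_smul G x⟩

lemma mul_card_le_card_pow_smul [Monoid G] [MulAction G Ω] [DecidableEq G] {T : Finset G}
    {c : ℝ} (hc : 0 ≤ c) (hT : ∀ X : Finset Ω, c * #X ≤ #(T • X)) (n : ℕ) (X : Finset Ω) :
    c ^ n * #X ≤ #(T ^ n • X) := by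
  induction n generalizing X with
  | zero => simp
  | succ n ih =>
    calc c ^ (n + 1) * #X = c * (c ^ n * #X) := by ring
      _ ≤ c * #(T ^ n • X) := mul_le_mul_of_nonneg_left (ih X) hc
      _ ≤ #(T ^ (n + 1) • X) := by rw [pow_succ', mul_smul]; exact hT _

lemma exists_nat_mul_card_le_card_pow_smul [Monoid G] [MulAction G Ω] [DecidableEq G]
    {T : Finset G} {c : ℝ} (hc : 1 < c) (hT : ∀ X : Finset Ω, c * #X ≤ #(T • X)) (k : ℕ) :
    ∃ n : ℕ, ∀ X : Finset Ω, k * #X ≤ #(T ^ n • X) := by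
  obtain ⟨n, hn⟩ := pow_unbounded_of_one_lt (k : ℝ) hc
  refine ⟨n, fun X => ?_⟩
  have hpow := mul_card_le_card_pow_smul (by linarith) hT n X
  have : (k : ℝ) * #X ≤ #(T ^ n • X) := by nlinarith [(#X).cast_nonneg (α := ℝ)]
  exact_mod_cast this

/-- Hall's marriage theorem for the bipartite graph joining `(x, i)` to the points of `T • x`. -/
lemma exists_injective_smul_of_card_le [SMul G Ω] {ι : Type*} [Fintype ι] (T : Finset G)
    (hT : ∀ X : Finset Ω, Fintype.card ι * #X ≤ #(T • X)) :
    ∃ g : Ω × ι → G, (∀ p, g p ∈ T) ∧ Injective fun p : Ω × ι => g p • p.1 := by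
  classical
  have hall : ∀ I : Finset (Ω × ι), #I ≤ #(I.biUnion fun p => T • {p.1}) := by
    intro I
    have hbiUnion : (I.biUnion fun p => T • {p.1}) = T • I.image Prod.fst := by
      ext y
      simp only [mem_biUnion, mem_smul, mem_singleton, mem_image]
      constructor
      · rintro ⟨p, hp, t, ht, _, rfl, rfl⟩
        exact ⟨t, ht, p.1, ⟨p, hp, rfl⟩, rfl⟩
      · rintro ⟨t, ht, _, ⟨p, hp, rfl⟩, rfl⟩
        exact ⟨p, hp, t, ht, p.1, rfl, rfl⟩
    calc #I ≤ #(I.image Prod.fst ×ˢ (univ : Finset ι)) :=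
          card_le_card fun p hp => mem_product.2 ⟨mem_image_of_mem _ hp, mem_univ _⟩
      _ = Fintype.card ι * #(I.image Prod.fst) := by rw [card_product, card_univ, mul_comm]
      _ ≤ #(I.biUnion fun p => T • {p.1}) := hbiUnion ▸ hT _
  obtain ⟨f, hfinj, hfT⟩ := (all_card_le_biUnion_card_iff_exists_injective _).1 hall
  have hmove : ∀ p : Ω × ι, ∃ t ∈ T, t • p.1 = f p := fun p => by
    simpa only [smul_singleton, mem_image] using hfT p
  choose g hgT hgf using hmove
  exact ⟨g, hgT, fun p q hpq => hfinj (by simpa only [hgf] using hpq)⟩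

end Growth

lemma setOf_exists_smul_eq_smul {G Ω : Type*} [SMul G Ω] (S : Set G) (X : Set Ω) :
    {y | ∃ x ∈ X, ∃ s ∈ S, y = s • x} = S • X := by
  ext y
  simp only [Set.mem_ofPred_eq, Set.mem_smul]
  exact ⟨fun ⟨x, hx, s, hs, h⟩ => ⟨s, hs, x, hx, h.symm⟩,
    fun ⟨s, hs, x, hx, h⟩ => ⟨x, hx, s, hs, h.symm⟩⟩

lemma natCard_setOf_exists_smul_sdiff {G Ω : Type*} [SMul G Ω] [DecidableEq Ω] (S : Finset G)
    (X : Finset Ω) :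
    Nat.card ↥({y | ∃ x ∈ (X : Set Ω), ∃ s ∈ (S : Set G), y = s • x} \ X) = #(S • X \ X) := by
  rw [setOf_exists_smul_eq_smul, ← coe_smul, ← coe_sdiff, Nat.card_coe_set_eq,
    Set.ncard_coe_finset]

/-- Følner condition for amenable actions: if the action of `G` on `Ω` admits an
invariant mean, then for every finite `S ⊆ G` and `ε > 0` there is a nonempty finite
`X ⊆ Ω` with `|XS \ X| < ε·|X|`. -/
theorem folner_of_invariant_mean (G Ω : Type*) [Group G] [MulAction G Ω]
    (h : ∃ m : Set Ω → ℝ, IsInvariantMean G Ω m)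
    (S : Set G) (hS : S.Finite) (ε : ℝ) (hε : 0 < ε) :
    ∃ X : Set Ω, X.Finite ∧ X.Nonempty ∧
      (Nat.card ↥({y | ∃ x ∈ X, ∃ s ∈ S, y = s • x} \ X) : ℝ) < ε * (Nat.card ↥X : ℝ) := by
  classical
  obtain ⟨m, hm⟩ := h
  by_contra! hfail
  set T := insert 1 hS.toFinset
  have hgrowth : ∀ X : Finset Ω, (1 + ε) * #X ≤ #(T • X) := by
    intro X
    rcases X.eq_empty_or_nonempty with rfl | hX
    · simp
    have hX := hfail X X.finite_toSet (mod_cast hX)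
    rw [← hS.coe_toFinset, natCard_setOf_exists_smul_sdiff, Nat.card_coe_set_eq,
      Set.ncard_coe_finset] at hX
    have hT : (#(hS.toFinset • X \ X) : ℝ) + #X ≤ #(T • X) :=
      mod_cast card_smul_sdiff_add_card_le hS.toFinset X
    linarith
  obtain ⟨n, hdouble⟩ :=
    exists_nat_mul_card_le_card_pow_smul (by linarith) hgrowth (Fintype.card Bool)
  obtain ⟨g, hgT, hinj⟩ := exists_injective_smul_of_card_le _ hdouble
  simpa using hm.card_le_one_of_injective_smul _ g hgT hinj
end

section
/- Let $d, \ell \ge 1$ be fixed. Let $(G_n)_{n\ge 1}$ be finite solvable groups of derived length at most $\ell$, acting transitively on finite sets $(\Omega_n)_{n\ge 1}$ with $|\Omega_n| \to \infty$, and let $S_n \subseteq G_n$ be symmetric subsets with $|S_n| \le d$. Then $\liminf_{n\to\infty} h_{ver}(\mathrm{Sch}(G_n \circlearrowright \Omega_n, S_n)) = 0$; i.e., the Schreier graphs are not expanders. -/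
open Filter

/-- The vertex isoperimetric number of the Schreier graph `Sch(G ↷ Ω, S)`:
the infimum of `|XS \ X| / |X|` over nonempty `X ⊆ Ω` with `|X| ≤ |Ω|/2`. -/
noncomputable def schreierIso (G : Type*) (Ω : Type*) [Group G] [MulAction G Ω]
    [Finite Ω] (S : Set G) : ℝ :=
  sInf {r | ∃ X : Set Ω, X.Nonempty ∧ 2 * Nat.card ↥X ≤ Nat.card Ω ∧
    r = (Nat.card ↥({y | ∃ x ∈ X, ∃ s ∈ S, y = s • x} \ X) : ℝ) / (Nat.card ↥X : ℝ)}

/-!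
Groups of derived length at most `ℓ` admit Følner sets of uniformly bounded size: for all `K`
and `D` there is `B` such that every such group and every `T` with `|T| ≤ D` have a nonempty `F`
with `|F| ≤ B` and `K |sF \ F| ≤ |F|` for `s ∈ T`. In an abelian group take a box
`{∏ t ^ e_t : 0 ≤ e_t ≤ r}`: its size grows polynomially in `r`, so some step `r → r + 1` enlarges
it by a factor at most `1 + 1/K`. For the induction, a Følner set of `G^ab` and one of `[G, G]` for
the cocycles of a section `G^ab → G` multiply to a Følner set of `G`.

Pushing the counting measure of `F` along an orbit map gives a function on `Ω` whose variation
along each `s ∈ S` is at most `|F| / K`; by the discrete co-area formula one of its superlevel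
sets `X` has `|XS \ X| ≤ |S| |X| / K`, and `|X| ≤ |F| ≤ B ≤ |Ω| / 2` once `|Ω|` is large.
-/

open Finset Pointwise

universe u

theorem exists_pow_mul_succ_pow_lt {K : ℕ} (hK : 0 < K) (D : ℕ) :
    ∃ R, K ^ R * (R + 1) ^ D < (K + 1) ^ R := by
  have hK' : (0 : ℝ) < K := by exact_mod_cast hK
  have hr : (1 : ℝ) < (K + 1) / K := by rw [one_lt_div hK']; linarith
  obtain ⟨R, hR⟩ := (((tendsto_pow_const_div_const_pow_of_one_lt D hr).comp
    (tendsto_add_atTop_nat 1)).eventually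
      (gt_mem_nhds (by positivity : (0 : ℝ) < K / (K + 1)))).exists
  refine ⟨R, ?_⟩
  simp only [Function.comp_apply, Nat.cast_add, Nat.cast_one, div_pow] at hR
  rw [div_div_eq_mul_div, div_lt_div_iff₀ (by positivity) (by positivity)] at hR
  rw [← Nat.cast_lt (α := ℝ)]
  push_cast
  rw [pow_succ, pow_succ] at hR
  have h : (K : ℝ) ^ R * (R + 1) ^ D * (K * (K + 1)) < (K + 1) ^ R * (K * (K + 1)) := by
    linarith
  exact lt_of_mul_lt_mul_right h (by positivity)

theorem exists_lt_mul_le_of_pow_mul_lt {K R : ℕ} (a : ℕ → ℕ)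
    (h : K ^ R * a R < (K + 1) ^ R * a 0) : ∃ r < R, K * a (r + 1) ≤ (K + 1) * a r := by
  by_contra! hgrow
  have key : ∀ r ≤ R, (K + 1) ^ r * a 0 ≤ K ^ r * a r := by
    intro r hr
    induction r with
    | zero => simp
    | succ r ih =>
      calc (K + 1) ^ (r + 1) * a 0 = (K + 1) * ((K + 1) ^ r * a 0) := by ring
        _ ≤ (K + 1) * (K ^ r * a r) := Nat.mul_le_mul_left _ (ih (by omega))
        _ = K ^ r * ((K + 1) * a r) := by ring
        _ ≤ K ^ r * (K * a (r + 1)) := Nat.mul_le_mul_left _ (hgrow r (by omega)).le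
        _ = K ^ (r + 1) * a (r + 1) := by ring
  exact (key R le_rfl).not_gt h

theorem Finset.card_smul_finset_sdiff {α β : Type*} [Group α] [MulAction α β] [DecidableEq β]
    (a : α) (s : Finset β) : #(a • s \ s) = #{x ∈ s | a • x ∉ s} := by
  rw [← card_smul_finset a {x ∈ s | a • x ∉ s}]
  congr 1
  ext y
  simp only [mem_sdiff, mem_smul_finset, mem_filter]
  constructor
  · rintro ⟨⟨x, hx, rfl⟩, hy⟩
    exact ⟨x, ⟨hx, hy⟩, rfl⟩
  · rintro ⟨x, ⟨hx, hy⟩, rfl⟩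
    exact ⟨⟨x, hx, rfl⟩, hy⟩

section Foelner
variable {G : Type*} [Group G] [DecidableEq G]

/-- The Følner condition `|sF \ F| ≤ ε |F|` with `ε = 1 / K`. -/
def IsFoelnerSet (K : ℕ) (T F : Finset G) : Prop :=
  F.Nonempty ∧ ∀ s ∈ T, K * #(s • F \ F) ≤ #F

theorem isFoelnerSet_one (K : ℕ) {T : Finset G} (hT : ∀ s ∈ T, s = 1) : IsFoelnerSet K T {1} :=
  ⟨singleton_nonempty 1, fun s hs => by simp [hT s hs]⟩

end Foelner

namespace CommGroup
variable {Q : Type*} [CommGroup Q] [DecidableEq Q]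

def box (T : Finset Q) (r : ℕ) : Finset Q :=
  (Fintype.piFinset fun _ : T => range (r + 1)).image fun f => ∏ t : T, (t : Q) ^ f t

variable (T : Finset Q)

theorem one_mem_box (r : ℕ) : 1 ∈ box T r :=
  mem_image.2 ⟨0, by simp, by simp⟩

theorem card_box_le (r : ℕ) : #(box T r) ≤ (r + 1) ^ #T :=
  card_image_le.trans (by simp)

theorem box_subset_box_succ (r : ℕ) : box T r ⊆ box T (r + 1) :=
  image_subset_image <| Fintype.piFinset_subset _ _ fun _ => range_subset_range.2 (by omega)

theorem smul_box_subset {s : Q} (hs : s ∈ T) (r : ℕ) : s • box T r ⊆ box T (r + 1) := by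
  intro y hy
  obtain ⟨_, hx, rfl⟩ := mem_smul_finset.1 hy
  obtain ⟨f, hf, rfl⟩ := mem_image.1 hx
  set i : T := ⟨s, hs⟩
  refine mem_image.2 ⟨f + Pi.single i 1, ?_, ?_⟩
  · simp only [Fintype.mem_piFinset, mem_range, Pi.add_apply] at hf ⊢
    intro t
    have hft := hf t
    have hi : Pi.single (M := fun _ => ℕ) i 1 t ≤ 1 := by rw [Pi.single_apply]; split_ifs <;> simp
    omega
  · have hsingle : ∏ t : T, (t : Q) ^ Pi.single (M := fun _ => ℕ) i 1 t = s :=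
      (Fintype.prod_eq_single i fun t ht => by simp [ht]).trans (by simp [i])
    simp only [Pi.add_apply, pow_add, prod_mul_distrib, hsingle, smul_eq_mul, mul_comm]

theorem isFoelnerSet_box {K r : ℕ} (h : K * #(box T (r + 1)) ≤ (K + 1) * #(box T r)) :
    IsFoelnerSet K T (box T r) := by
  refine ⟨⟨1, one_mem_box T r⟩, fun s hs => ?_⟩
  have hsub : s • box T r \ box T r ⊆ box T (r + 1) \ box T r :=
    sdiff_subset_sdiff (smul_box_subset T hs r) subset_rfl
  calc K * #(s • box T r \ box T r) ≤ K * (#(box T (r + 1)) - #(box T r)) := by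
        rw [← card_sdiff_of_subset (box_subset_box_succ T r)]
        exact Nat.mul_le_mul_left _ (card_le_card hsub)
    _ ≤ #(box T r) := by rw [Nat.mul_sub, Nat.sub_le_iff_le_add]; linarith

theorem exists_isFoelnerSet_card_le {K : ℕ} (hK : 0 < K) (D : ℕ) :
    ∃ B, ∀ (Q : Type u) [CommGroup Q] [DecidableEq Q] (T : Finset Q), #T ≤ D →
      ∃ F, #F ≤ B ∧ IsFoelnerSet K T F := by
  obtain ⟨R, hR⟩ := exists_pow_mul_succ_pow_lt hK D
  refine ⟨(R + 1) ^ D, fun Q _ _ T hT => ?_⟩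
  have hbox : ∀ r, #(box T r) ≤ (r + 1) ^ D := fun r =>
    (card_box_le T r).trans (Nat.pow_le_pow_right r.succ_pos hT)
  obtain ⟨r, hrR, hr⟩ := exists_lt_mul_le_of_pow_mul_lt (fun r => #(box T r)) <|
    calc K ^ R * #(box T R) ≤ K ^ R * (R + 1) ^ D := Nat.mul_le_mul_left _ (hbox R)
      _ < (K + 1) ^ R := hR
      _ ≤ (K + 1) ^ R * #(box T 0) :=
        Nat.le_mul_of_pos_right _ (card_pos.2 ⟨1, one_mem_box T 0⟩)
  exact ⟨box T r, (hbox r).trans (Nat.pow_le_pow_left (by omega) D), isFoelnerSet_box T hr⟩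

end CommGroup

section Extension
variable {G Q : Type*} [Group G] [Group Q] (φ : G →* Q) {σ : Q → G}

def sectionCocycle (hσ : Function.RightInverse σ φ) (s : G) (q : Q) : φ.ker :=
  ⟨(σ (φ s * q))⁻¹ * s * σ q, by simp [hσ _]⟩

theorem mul_section_mul (hσ : Function.RightInverse σ φ) (s : G) (q : Q) (n : φ.ker) :
    s * (σ q * n) = σ (φ s * q) * ↑(sectionCocycle φ hσ s q * n) := by
  simp [sectionCocycle, mul_assoc]

variable [DecidableEq G]

def sectionMul (σ : Q → G) (FQ : Finset Q) (FN : Finset φ.ker) : Finset G :=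
  (FQ ×ˢ FN).image fun p => σ p.1 * p.2

theorem card_sectionMul (hσ : Function.RightInverse σ φ) (FQ : Finset Q) (FN : Finset φ.ker) :
    #(sectionMul φ σ FQ FN) = #FQ * #FN := by
  refine (card_image_of_injective _ fun p p' h => ?_).trans (card_product _ _)
  have h1 : p.1 = p'.1 := by
    simpa [hσ _, MonoidHom.mem_ker.1 p.2.2, MonoidHom.mem_ker.1 p'.2.2] using congrArg φ h
  simp only [h1, mul_right_inj] at h
  exact Prod.ext h1 (Subtype.ext h)

theorem smul_sectionMul_sdiff_subset [DecidableEq Q] (hσ : Function.RightInverse σ φ) (s : G)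
    (FQ : Finset Q) (FN : Finset φ.ker) :
    s • sectionMul φ σ FQ FN \ sectionMul φ σ FQ FN ⊆
      ({p ∈ FQ ×ˢ FN | φ s * p.1 ∉ FQ} ∪
        {p ∈ FQ ×ˢ FN | sectionCocycle φ hσ s p.1 * p.2 ∉ FN}).image
        fun p => s * (σ p.1 * p.2) := by
  intro y hy
  obtain ⟨hy, hyF⟩ := mem_sdiff.1 hy
  obtain ⟨_, hx, rfl⟩ := mem_smul_finset.1 hy
  obtain ⟨⟨q, n⟩, hqn, rfl⟩ := mem_image.1 hx
  refine mem_image.2 ⟨(q, n), ?_, rfl⟩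
  rw [← filter_or, mem_filter]
  refine ⟨hqn, not_and_or.1 fun ⟨hq, hn⟩ => hyF ?_⟩
  rw [smul_eq_mul, mul_section_mul φ hσ]
  exact mem_image.2 ⟨(φ s * q, _), mem_product.2 ⟨hq, hn⟩, rfl⟩

theorem isFoelnerSet_sectionMul [DecidableEq Q] (hσ : Function.RightInverse σ φ) {K : ℕ}
    {T : Finset G} {FQ : Finset Q} {FN : Finset φ.ker}
    (hQ : IsFoelnerSet (2 * K) (T.image φ) FQ)
    (hN : IsFoelnerSet (2 * K) ((T ×ˢ FQ).image fun p => sectionCocycle φ hσ p.1 p.2) FN) :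
    IsFoelnerSet K T (sectionMul φ σ FQ FN) := by
  refine ⟨(hQ.1.product hN.1).image _, fun s hs => ?_⟩
  set c := sectionCocycle φ hσ s
  have hQs : 2 * K * #{q ∈ FQ | φ s * q ∉ FQ} ≤ #FQ := by
    simpa [card_smul_finset_sdiff] using hQ.2 (φ s) (mem_image_of_mem φ hs)
  have hNs : ∀ q ∈ FQ, 2 * K * #{n ∈ FN | c q * n ∉ FN} ≤ #FN := fun q hq => by
    simpa [card_smul_finset_sdiff] using
      hN.2 (c q) (mem_image.2 ⟨(s, q), mem_product.2 ⟨hs, hq⟩, rfl⟩)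
  have hA : 2 * K * #{p ∈ FQ ×ˢ FN | φ s * p.1 ∉ FQ} ≤ #FQ * #FN := by
    rw [filter_product_left (fun q => φ s * q ∉ FQ), card_product, ← mul_assoc]
    exact Nat.mul_le_mul_right _ hQs
  have hB : 2 * K * #{p ∈ FQ ×ˢ FN | c p.1 * p.2 ∉ FN} ≤ #FQ * #FN := by
    have hcard : #{p ∈ FQ ×ˢ FN | c p.1 * p.2 ∉ FN} = ∑ q ∈ FQ, #{n ∈ FN | c q * n ∉ FN} := by
      simp only [card_filter, sum_product]
    rw [hcard, mul_sum]
    exact (sum_le_sum hNs).trans_eq (by rw [sum_const, smul_eq_mul])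
  have hbd := (card_le_card (smul_sectionMul_sdiff_subset φ hσ s FQ FN)).trans
    (card_image_le.trans (card_union_le _ _))
  rw [card_sectionMul φ hσ]
  have h2 : 2 * (K * #(s • sectionMul φ σ FQ FN \ sectionMul φ σ FQ FN)) ≤ 2 * (#FQ * #FN) := by
    nlinarith
  omega

end Extension

theorem map_subtype_derivedSeries_commutator (G : Type*) [Group G] (n : ℕ) :
    (derivedSeries (commutator G) n).map (commutator G).subtype = derivedSeries G (n + 1) := by
  induction n with
  | zero =>
    rw [derivedSeries_zero, ← MonoidHom.range_eq_map, Subgroup.range_subtype, derivedSeries_one]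
  | succ n ih => rw [derivedSeries_succ, Subgroup.map_commutator, ih, derivedSeries_succ G (n + 1)]

theorem derivedSeries_commutator_eq_bot {G : Type*} [Group G] {n : ℕ}
    (h : derivedSeries G (n + 1) = ⊥) : derivedSeries (commutator G) n = ⊥ :=
  (Subgroup.map_eq_bot_iff_of_injective _ (Subgroup.subtype_injective _)).1
    ((map_subtype_derivedSeries_commutator G n).trans h)

theorem exists_isFoelnerSet_card_le_of_derivedSeries_eq_bot (ℓ : ℕ) {K : ℕ} (hK : 0 < K)
    (D : ℕ) : ∃ B, ∀ (G : Type u) [Group G] [DecidableEq G], derivedSeries G ℓ = ⊥ →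
      ∀ T : Finset G, #T ≤ D → ∃ F, #F ≤ B ∧ IsFoelnerSet K T F := by
  induction ℓ generalizing K D with
  | zero =>
    refine ⟨1, fun G _ _ hG T _ => ⟨{1}, (card_singleton 1).le, isFoelnerSet_one K fun s _ => ?_⟩⟩
    rw [← Subgroup.mem_bot, ← hG, derivedSeries_zero]
    exact Subgroup.mem_top s
  | succ ℓ ih =>
    classical
    obtain ⟨B₁, hQ⟩ := CommGroup.exists_isFoelnerSet_card_le (by omega : 0 < 2 * K) D
    obtain ⟨B₂, hN⟩ := ih (by omega : 0 < 2 * K) (D * B₁)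
    refine ⟨B₁ * B₂, fun G _ _ hG T hT => ?_⟩
    let φ : G →* Abelianization G := Abelianization.of
    have hσ := Function.rightInverse_surjInv (QuotientGroup.mk_surjective (s := commutator G))
    obtain ⟨FQ, hFQ, hFQ'⟩ := hQ _ (T.image φ) (card_image_le.trans hT)
    have hker : derivedSeries φ.ker ℓ = ⊥ := by
      rw [Abelianization.ker_of]
      exact derivedSeries_commutator_eq_bot hG
    obtain ⟨FN, hFN, hFN'⟩ := hN _ hker ((T ×ˢ FQ).image fun p => sectionCocycle φ hσ p.1 p.2)
      (card_image_le.trans (by rw [card_product]; exact Nat.mul_le_mul hT hFQ))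
    exact ⟨sectionMul φ _ FQ FN, (card_sectionMul φ hσ FQ FN).trans_le (Nat.mul_le_mul hFQ hFN),
      isFoelnerSet_sectionMul φ hσ hFQ' hFN'⟩

section LevelSets
variable {Ω : Type*} [Fintype Ω]

theorem sum_range_card_filter_le_lt {m m' : Ω → ℕ} {M : ℕ} (hm : ∀ x, m x ≤ M) :
    ∑ t ∈ range M, #{x | m' x ≤ t ∧ t < m x} = ∑ x, (m x - m' x) := by
  simp only [card_filter]
  rw [sum_comm]
  refine sum_congr rfl fun x _ => ?_
  rw [← card_filter, ← Nat.card_Ico]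
  congr 1
  ext t
  simp only [mem_filter, mem_range, mem_Ico]
  have := hm x
  omega

theorem exists_card_smul_sdiff_le_of_sum_sub_le {G : Type*} [SMul G Ω] [DecidableEq Ω]
    (S : Finset G) (K : ℕ) (m : Ω → ℕ) (hm : ∃ x, m x ≠ 0)
    (hvar : ∀ s ∈ S, K * ∑ x, (m x - m (s • x)) ≤ ∑ x, m x) :
    ∃ X : Finset Ω, X.Nonempty ∧ #X ≤ ∑ x, m x ∧ K * #(S • X \ X) ≤ #S * #X := by
  set M := univ.sup m
  have hmM : ∀ x, m x ≤ M := fun x => le_sup (mem_univ x)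
  set L : ℕ → Finset Ω := fun t => {x | t < m x}
  have hL : ∑ t ∈ range M, #(L t) = ∑ x, m x := by
    simpa [L] using sum_range_card_filter_le_lt (m' := 0) hmM
  have hbd : ∀ t, #(S • L t \ L t) ≤ ∑ s ∈ S, #{x | m (s • x) ≤ t ∧ t < m x} := by
    intro t
    refine (card_le_card fun y hy => ?_).trans (card_biUnion_le.trans (sum_le_sum fun s _ =>
      card_image_le (f := (s • ·))))
    obtain ⟨hy, hyL⟩ := mem_sdiff.1 hy
    obtain ⟨s, hs, x, hx, rfl⟩ := mem_smul.1 hy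
    simp only [L, mem_filter, mem_univ, true_and, not_lt] at hx hyL
    exact mem_biUnion.2 ⟨s, hs, mem_image.2 ⟨x, by simp [hx, hyL], rfl⟩⟩
  have key : ∑ t ∈ range M, K * #(S • L t \ L t) ≤ ∑ t ∈ range M, #S * #(L t) :=
    calc ∑ t ∈ range M, K * #(S • L t \ L t)
        ≤ ∑ t ∈ range M, K * ∑ s ∈ S, #{x | m (s • x) ≤ t ∧ t < m x} :=
          sum_le_sum fun t _ => Nat.mul_le_mul_left K (hbd t)
      _ = ∑ s ∈ S, K * ∑ x, (m x - m (s • x)) := by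
          simp only [← mul_sum, sum_comm (s := range M), sum_range_card_filter_le_lt hmM]
      _ ≤ ∑ s ∈ S, ∑ x, m x := sum_le_sum hvar
      _ = ∑ t ∈ range M, #S * #(L t) := by rw [← mul_sum, hL, sum_const, smul_eq_mul]
  obtain ⟨x₀, hx₀⟩ := hm
  obtain ⟨t, ht, hle⟩ := exists_le_of_sum_le
    (nonempty_range_iff.2 (by have := hmM x₀; omega)) key
  obtain ⟨xmax, -, hxmax⟩ := exists_mem_eq_sup univ ⟨x₀, mem_univ _⟩ m
  have hxt : xmax ∈ L t := by
    simpa only [L, mem_filter, mem_univ, true_and, ← hxmax, mem_range] using ht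
  refine ⟨L t, ⟨xmax, hxt⟩, ?_, hle⟩
  calc #(L t) = ∑ x ∈ L t, 1 := card_eq_sum_ones _
    _ ≤ ∑ x ∈ L t, m x := sum_le_sum fun x hx => by simp only [L, mem_filter] at hx; omega
    _ ≤ ∑ x, m x := sum_le_univ_sum_of_nonneg fun _ => Nat.zero_le _

end LevelSets

section OrbitCount
variable {G Ω : Type*} [Group G] [MulAction G Ω] [DecidableEq Ω]

def orbitCount (F : Finset G) (ω x : Ω) : ℕ := #{g ∈ F | g • ω = x}

variable (ω : Ω)

theorem sum_orbitCount [Fintype Ω] (F : Finset G) : ∑ x, orbitCount F ω x = #F :=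
  (card_eq_sum_card_fiberwise fun _ _ => mem_univ _).symm

theorem orbitCount_smul [DecidableEq G] (s : G) (F : Finset G) (x : Ω) :
    orbitCount (s • F) ω (s • x) = orbitCount F ω x := by
  rw [orbitCount, orbitCount, ← card_smul_finset s {g ∈ F | g • ω = x}]
  congr 1
  ext g
  simp only [mem_filter, mem_smul_finset, smul_eq_mul]
  constructor
  · rintro ⟨⟨g, hg, rfl⟩, hgx⟩
    exact ⟨g, ⟨hg, smul_left_cancel s (by rwa [mul_smul] at hgx)⟩, rfl⟩
  · rintro ⟨g, ⟨hg, rfl⟩, rfl⟩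
    exact ⟨⟨g, hg, rfl⟩, mul_smul _ _ _⟩

theorem orbitCount_sub_le [DecidableEq G] (A B : Finset G) (x : Ω) :
    orbitCount A ω x - orbitCount B ω x ≤ orbitCount (A \ B) ω x := by
  rw [orbitCount, orbitCount, orbitCount, Nat.sub_le_iff_le_add]
  refine (card_le_card (filter_subset_filter (· • ω = x) (le_sdiff_sup (a := B)))).trans ?_
  rw [sup_eq_union, filter_union]
  exact card_union_le _ _

theorem sum_orbitCount_sub_le [Fintype Ω] [DecidableEq G] (s : G) (F : Finset G) :
    ∑ x, (orbitCount F ω x - orbitCount F ω (s • x)) ≤ #(s • F \ F) :=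
  calc ∑ x, (orbitCount F ω x - orbitCount F ω (s • x))
      = ∑ x, (orbitCount (s • F) ω (s • x) - orbitCount F ω (s • x)) := by
        simp only [orbitCount_smul]
    _ = ∑ y, (orbitCount (s • F) ω y - orbitCount F ω y) :=
        Equiv.sum_comp (MulAction.toPerm s) fun y => orbitCount (s • F) ω y - orbitCount F ω y
    _ ≤ ∑ y, orbitCount (s • F \ F) ω y := sum_le_sum fun y _ => orbitCount_sub_le ω _ _ y
    _ = #(s • F \ F) := sum_orbitCount ω _

end OrbitCount

theorem IsFoelnerSet.exists_card_smul_sdiff_le {G Ω : Type*} [Group G] [DecidableEq G]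
    [MulAction G Ω] [Fintype Ω] [DecidableEq Ω] [Nonempty Ω] {K : ℕ} {S F : Finset G}
    (hF : IsFoelnerSet K S F) :
    ∃ X : Finset Ω, X.Nonempty ∧ #X ≤ #F ∧ K * #(S • X \ X) ≤ #S * #X := by
  obtain ⟨ω⟩ := ‹Nonempty Ω›
  obtain ⟨g, hg⟩ := hF.1
  have hm : orbitCount F ω (g • ω) ≠ 0 :=
    (card_pos.2 ⟨g, mem_filter.2 ⟨hg, rfl⟩⟩ : 0 < orbitCount F ω (g • ω)).ne'
  simpa only [sum_orbitCount] using exists_card_smul_sdiff_le_of_sum_sub_le S K _ ⟨_, hm⟩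
    fun s hs => (Nat.mul_le_mul_left K (sum_orbitCount_sub_le ω s F)).trans <|
      (hF.2 s hs).trans_eq (sum_orbitCount ω F).symm

theorem schreierIso_nonneg (G Ω : Type*) [Group G] [MulAction G Ω] [Finite Ω] (S : Set G) :
    0 ≤ schreierIso G Ω S :=
  Real.sInf_nonneg fun _ ⟨_, _, _, hr⟩ => hr ▸ by positivity

theorem schreierIso_le {G Ω : Type*} [Group G] [MulAction G Ω] [Finite Ω] [DecidableEq Ω]
    (S : Finset G) {X : Finset Ω} (hX : X.Nonempty) (hXΩ : 2 * #X ≤ Nat.card Ω) :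
    schreierIso G Ω S ≤ (#(S • X \ X) : ℝ) / #X := by
  refine csInf_le ⟨0, fun _ ⟨_, _, _, hr⟩ => hr ▸ by positivity⟩ ⟨X, hX, by simpa using hXΩ, ?_⟩
  have hbd : {y | ∃ x ∈ (X : Set Ω), ∃ s ∈ (S : Set G), y = s • x} \ (X : Set Ω) =
      ↑(S • X \ X) := by
    ext y
    simp only [coe_sdiff, coe_smul, Set.mem_sdiff, Set.mem_ofPred_eq, Set.mem_smul, mem_coe]
    constructor
    · rintro ⟨⟨x, hx, s, hs, rfl⟩, hy⟩; exact ⟨⟨s, hs, x, hx, rfl⟩, hy⟩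
    · rintro ⟨⟨s, hs, x, hx, rfl⟩, hy⟩; exact ⟨⟨x, hx, s, hs, rfl⟩, hy⟩
  rw [hbd, coe_sort_coe, coe_sort_coe, Nat.card_eq_finsetCard, Nat.card_eq_finsetCard]

theorem schreierIso_le_div_of_derivedSeries_eq_bot (ℓ d : ℕ) {K : ℕ} (hK : 0 < K) :
    ∃ B, ∀ (G Ω : Type u) [Group G] [MulAction G Ω] [Finite Ω], derivedSeries G ℓ = ⊥ →
      2 * B ≤ Nat.card Ω → ∀ S : Set G, S.Finite → Nat.card S ≤ d →
        schreierIso G Ω S ≤ d / K := by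
  obtain ⟨B, hB⟩ := exists_isFoelnerSet_card_le_of_derivedSeries_eq_bot ℓ hK d
  refine ⟨B, fun G Ω _ _ _ hG hΩ S hS hSd => ?_⟩
  classical
  have : Fintype Ω := Fintype.ofFinite Ω
  have hSd' : #hS.toFinset ≤ d := by
    rwa [← Set.ncard_eq_toFinset_card S hS, ← Nat.card_coe_set_eq]
  obtain ⟨F, hFB, hF⟩ := hB G hG hS.toFinset hSd'
  have : Nonempty Ω := Nat.card_pos_iff.1 (by have := hF.1.card_pos; omega) |>.1
  obtain ⟨X, hX, hXF, hXS⟩ := hF.exists_card_smul_sdiff_le (Ω := Ω)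
  have hXpos : (0 : ℝ) < #X := by exact_mod_cast hX.card_pos
  calc schreierIso G Ω S = schreierIso G Ω (hS.toFinset : Set G) := by rw [hS.coe_toFinset]
    _ ≤ #(hS.toFinset • X \ X) / #X := schreierIso_le _ hX (by omega)
    _ ≤ d / K := by
      rw [div_le_div_iff₀ hXpos (by exact_mod_cast hK)]
      exact_mod_cast (mul_comm _ _).trans_le (hXS.trans (Nat.mul_le_mul_right _ hSd'))

theorem solvable_actions_not_expanding_general (d ℓ : ℕ)
    (G : ℕ → Type) [∀ n, Group (G n)]
    (hsolv : ∀ n, derivedSeries (G n) ℓ = ⊥)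
    (Ω : ℕ → Type) [∀ n, MulAction (G n) (Ω n)] [∀ n, Finite (Ω n)]
    (hcard : Tendsto (fun n => Nat.card (Ω n)) atTop atTop)
    (S : ∀ n, Set (G n))
    (hScard : ∀ n, Nat.card ↥(S n) ≤ d) (hSfin : ∀ n, (S n).Finite) :
    liminf (fun n => schreierIso (G n) (Ω n) (S n)) atTop = 0 := by
  refine (tendsto_order.2 ⟨fun ε hε => .of_forall fun n =>
    hε.trans_le (schreierIso_nonneg _ _ _), fun ε hε => ?_⟩).liminf_eq
  obtain ⟨K, hK⟩ := exists_nat_gt (d / ε)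
  have hK0 : (0 : ℝ) < K := (by positivity : (0 : ℝ) ≤ d / ε).trans_lt hK
  obtain ⟨B, hB⟩ := schreierIso_le_div_of_derivedSeries_eq_bot ℓ d (K := K) (by exact_mod_cast hK0)
  filter_upwards [hcard.eventually_ge_atTop (2 * B)] with n hn
  exact (hB _ _ (hsolv n) hn (S n) (hSfin n) (hScard n)).trans_lt ((div_lt_comm₀ hK0 hε).2 hK)

/-- Finite solvable groups of bounded derived length acting transitively on finite sets of
unbounded size, with symmetric sets of bounded cardinality, do not produce expander
Schreier graphs. -/
theorem solvable_actions_not_expanding (d ℓ : ℕ) (hd : 1 ≤ d) (hℓ : 1 ≤ ℓ)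
    (G : ℕ → Type) [∀ n, Group (G n)] [∀ n, Finite (G n)]
    (hsolv : ∀ n, derivedSeries (G n) ℓ = ⊥)
    (Ω : ℕ → Type) [∀ n, MulAction (G n) (Ω n)] [∀ n, Finite (Ω n)]
    (htrans : ∀ n, ∀ x y : Ω n, ∃ g : G n, g • x = y)
    (hcard : Tendsto (fun n => Nat.card (Ω n)) atTop atTop)
    (S : ∀ n, Set (G n)) (hSsym : ∀ n, ∀ s ∈ S n, s⁻¹ ∈ S n)
    (hScard : ∀ n, Nat.card ↥(S n) ≤ d) (hSfin : ∀ n, (S n).Finite) :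
    liminf (fun n => schreierIso (G n) (Ω n) (S n)) atTop = 0 :=
  solvable_actions_not_expanding_general d ℓ G hsolv Ω hcard S hScard hSfin
end
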